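/- arXiv:1012.3885 — 3 statements merged into one kernel-verified Lean document; each statement's English description precedes it below -/
import Mathlib

section
/- The infinite-dimensional superalgebra AK(1) spanned by even elements ε_n (n ∈ ℤ) and odd elements a_i (i ∈ ℤ + 1/2), with products ε_n·ε_m = ε_{n+m}, ε_n·a_i = (1/2)a_{n+i} = a_i·ε_n, and a_i·a_j = (1/2)(j−i)ε_{i+j}, satisfies the four Lie antialgebra identities: associativity on the even part; x₁·(x₂·y) = (1/2)(x₁·x₂)·y; the odd-derivation identity x·(y₁·y₂) = (x·y₁)·y₂ + y₁·(x·y₂); and the Jacobi-type identity y₁·(y₂·y₃) + y₂·(y₃·y₁) + y₃·(y₁·y₂) = 0. -/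
/-!
STATEMENT 1: The conformal Lie antialgebra `AK(1)` over `ℚ`.
The even part is spanned by `ε_n` (`n ∈ ℤ`) and is modelled as `ℤ →₀ ℚ`
(coefficient of `ε_n` at `n`).  The odd part is spanned by `a_i` (`i ∈ ℤ + 1/2`)
and is modelled as `ℤ →₀ ℚ`, an index `p : ℤ` representing `i = p + 1/2`.
Products on basis vectors:
`ε_n · ε_m = ε_{n+m}`, `ε_n · a_i = (1/2) a_{n+i}`,
`a_i · a_j = (1/2)(j - i) ε_{i+j}` (with `i = p + 1/2`, `j = q + 1/2`,
so `j - i = q - p` and `i + j = (p + q + 1)` as an even index).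
The theorem asserts the four Lie antialgebra identities for these products.
-/

noncomputable section

/-- Even-even product of `AK(1)`. -/
def akEE (f g : ℤ →₀ ℚ) : ℤ →₀ ℚ :=
  f.sum fun n c => g.sum fun m d => Finsupp.single (n + m) (c * d)

/-- Even-odd product of `AK(1)`. -/
def akEO (f g : ℤ →₀ ℚ) : ℤ →₀ ℚ :=
  f.sum fun n c => g.sum fun p d => Finsupp.single (n + p) (c * d / 2)

/-- Odd-odd product of `AK(1)`. -/
def akOO (f g : ℤ →₀ ℚ) : ℤ →₀ ℚ :=
  f.sum fun p c => g.sum fun q d => Finsupp.single (p + q + 1) (c * d * ((q - p : ℤ) : ℚ) / 2)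

open Finsupp

lemma akEE_zero_left (g) : akEE 0 g = 0 := by simp [akEE]
lemma akEE_zero_right (f) : akEE f 0 = 0 := by simp [akEE]
lemma akEO_zero_left (g) : akEO 0 g = 0 := by simp [akEO]
lemma akEO_zero_right (f) : akEO f 0 = 0 := by simp [akEO]
lemma akOO_zero_left (g) : akOO 0 g = 0 := by simp [akOO]
lemma akOO_zero_right (f) : akOO f 0 = 0 := by simp [akOO]

lemma akEE_add_left (f f' g) : akEE (f + f') g = akEE f g + akEE f' g := by
  unfold akEE
  apply Finsupp.sum_add_index' <;> intros <;> simp [add_mul, Finsupp.single_add, Finsupp.sum_add]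

lemma akEE_add_right (f g g') : akEE f (g + g') = akEE f g + akEE f g' := by
  unfold akEE
  rw [← Finsupp.sum_add]
  refine Finsupp.sum_congr fun n _ => ?_
  apply Finsupp.sum_add_index' <;> intros <;> simp [mul_add, Finsupp.single_add]

lemma akEO_add_left (f f' g) : akEO (f + f') g = akEO f g + akEO f' g := by
  unfold akEO
  apply Finsupp.sum_add_index' <;> intros <;>
    simp [add_mul, add_div, Finsupp.single_add, Finsupp.sum_add]

lemma akEO_add_right (f g g') : akEO f (g + g') = akEO f g + akEO f g' := by
  unfold akEO
  rw [← Finsupp.sum_add]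
  refine Finsupp.sum_congr fun n _ => ?_
  apply Finsupp.sum_add_index' <;> intros <;> simp [mul_add, add_div, Finsupp.single_add]

lemma akOO_add_left (f f' g) : akOO (f + f') g = akOO f g + akOO f' g := by
  unfold akOO
  apply Finsupp.sum_add_index' <;> intros <;>
    simp [add_mul, add_div, Finsupp.single_add, Finsupp.sum_add]

lemma akOO_add_right (f g g') : akOO f (g + g') = akOO f g + akOO f g' := by
  unfold akOO
  rw [← Finsupp.sum_add]
  refine Finsupp.sum_congr fun n _ => ?_
  refine Finsupp.sum_add_index' (fun q => by simp) (fun q d₁ d₂ => ?_)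
  rw [← Finsupp.single_add]; congr 1; ring

lemma akEE_single_single (n m : ℤ) (c d : ℚ) :
    akEE (single n c) (single m d) = single (n + m) (c * d) := by
  unfold akEE
  rw [Finsupp.sum_single_index, Finsupp.sum_single_index] <;> simp

lemma akEO_single_single (n m : ℤ) (c d : ℚ) :
    akEO (single n c) (single m d) = single (n + m) (c * d / 2) := by
  unfold akEO
  rw [Finsupp.sum_single_index, Finsupp.sum_single_index] <;> simp

lemma akOO_single_single (n m : ℤ) (c d : ℚ) :
    akOO (single n c) (single m d) = single (n + m + 1) (c * d * ((m - n : ℤ) : ℚ) / 2) := by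
  unfold akOO
  rw [Finsupp.sum_single_index, Finsupp.sum_single_index] <;> simp

/-- Generic: a trilinear-in-the-sense-of-additive map vanishing on singles vanishes. -/
lemma triadd_eq_zero (T : (ℤ →₀ ℚ) → (ℤ →₀ ℚ) → (ℤ →₀ ℚ) → (ℤ →₀ ℚ))
    (z1 : ∀ b c, T 0 b c = 0) (z2 : ∀ a c, T a 0 c = 0) (z3 : ∀ a b, T a b 0 = 0)
    (h1 : ∀ a a' b c, T (a + a') b c = T a b c + T a' b c)
    (h2 : ∀ a b b' c, T a (b + b') c = T a b c + T a b' c)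
    (h3 : ∀ a b c c', T a b (c + c') = T a b c + T a b c')
    (hs : ∀ p (x : ℚ) q y r z, T (single p x) (single q y) (single r z) = 0) :
    ∀ a b c, T a b c = 0 := by
  intro a b c
  induction a using Finsupp.induction with
  | zero => exact z1 b c
  | single_add p x f _ _ ih =>
    rw [h1, ih, add_zero]
    clear ih
    induction b using Finsupp.induction with
    | zero => exact z2 _ c
    | single_add q y g _ _ ih =>
      rw [h2, ih, add_zero]
      clear ih
      induction c using Finsupp.induction with
      | zero => exact z3 _ _
      | single_add r z h _ _ ih =>
        rw [h3, ih, add_zero, hs]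

theorem ak1_satisfies_lie_antialgebra_identities :
    -- (1) associativity on the even part
    (∀ x₁ x₂ x₃ : ℤ →₀ ℚ, akEE x₁ (akEE x₂ x₃) = akEE (akEE x₁ x₂) x₃) ∧
    -- (2) x₁·(x₂·y) = (1/2)(x₁·x₂)·y
    (∀ x₁ x₂ y : ℤ →₀ ℚ, akEO x₁ (akEO x₂ y) = (1/2 : ℚ) • akEO (akEE x₁ x₂) y) ∧
    -- (3) the odd-derivation identity x·(y₁·y₂) = (x·y₁)·y₂ + y₁·(x·y₂)
    (∀ x y₁ y₂ : ℤ →₀ ℚ, akEE x (akOO y₁ y₂) = akOO (akEO x y₁) y₂ + akOO y₁ (akEO x y₂)) ∧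
    -- (4) y₁·(y₂·y₃) + y₂·(y₃·y₁) + y₃·(y₁·y₂) = 0 (recall y·x = x·y for x even, y odd)
    (∀ y₁ y₂ y₃ : ℤ →₀ ℚ,
      akEO (akOO y₂ y₃) y₁ + akEO (akOO y₃ y₁) y₂ + akEO (akOO y₁ y₂) y₃ = 0) := by
  refine ⟨?_, ?_, ?_, ?_⟩
  · intro x₁ x₂ x₃
    rw [← sub_eq_zero]
    refine triadd_eq_zero (fun a b c => akEE a (akEE b c) - akEE (akEE a b) c)
      ?_ ?_ ?_ ?_ ?_ ?_ ?_ x₁ x₂ x₃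
    · intro b c; simp [akEE_zero_left]
    · intro a c; simp [akEE_zero_left, akEE_zero_right]
    · intro a b; simp [akEE_zero_right]
    · intro a a' b c; simp only [akEE_add_left]; abel
    · intro a b b' c; simp only [akEE_add_left, akEE_add_right]; abel
    · intro a b c c'; simp only [akEE_add_right]; abel
    · intro p x q y r z
      simp only [akEE_single_single]
      rw [sub_eq_zero, add_assoc, mul_assoc]
  · intro x₁ x₂ y
    rw [← sub_eq_zero]
    refine triadd_eq_zero
      (fun a b c => akEO a (akEO b c) - (1/2 : ℚ) • akEO (akEE a b) c)
      ?_ ?_ ?_ ?_ ?_ ?_ ?_ x₁ x₂ y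
    · intro b c; simp [akEO_zero_left, akEE_zero_left]
    · intro a c; simp [akEO_zero_left, akEO_zero_right, akEE_zero_right]
    · intro a b; simp [akEO_zero_right]
    · intro a a' b c; simp only [akEO_add_left, akEE_add_left, smul_add]; abel
    · intro a b b' c; simp only [akEO_add_left, akEO_add_right, akEE_add_right, smul_add]; abel
    · intro a b c c'; simp only [akEO_add_right, smul_add]; abel
    · intro p x q y r z
      simp only [akEO_single_single, akEE_single_single, Finsupp.smul_single]
      rw [sub_eq_zero, add_assoc]
      congr 1
      rw [smul_eq_mul]; ring
  · intro x y₁ y₂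
    rw [← sub_eq_zero]
    refine triadd_eq_zero
      (fun a b c => akEE a (akOO b c) - (akOO (akEO a b) c + akOO b (akEO a c)))
      ?_ ?_ ?_ ?_ ?_ ?_ ?_ x y₁ y₂
    · intro b c; simp [akEE_zero_left, akEO_zero_left, akOO_zero_left, akOO_zero_right]
    · intro a c; simp [akOO_zero_left, akEE_zero_right, akEO_zero_right]
    · intro a b; simp [akOO_zero_right, akEE_zero_right, akEO_zero_right, akOO_zero_left]
    · intro a a' b c
      simp only [akEE_add_left, akEO_add_left, akOO_add_left, akOO_add_right]; abel
    · intro a b b' c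
      simp only [akOO_add_left, akEE_add_right, akEO_add_right, akOO_add_right]; abel
    · intro a b c c'
      simp only [akOO_add_right, akEE_add_right, akEO_add_right, akOO_add_left]; abel
    · intro p x q y r z
      simp only [akEE_single_single, akEO_single_single, akOO_single_single]
      have i1 : p + q + q + 1 = p + (q + q + 1) := by ring
      have i2 : (p + q) + r + 1 = p + (q + r + 1) := by ring
      have i3 : q + (p + r) + 1 = p + (q + r + 1) := by ring
      rw [i2, i3, ← Finsupp.single_add, sub_eq_zero]
      congr 1
      push_cast
      ring
  · intro y₁ y₂ y₃
    refine triadd_eq_zero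
      (fun a b c => akEO (akOO b c) a + akEO (akOO c a) b + akEO (akOO a b) c)
      ?_ ?_ ?_ ?_ ?_ ?_ ?_ y₁ y₂ y₃
    · intro b c; simp [akOO_zero_left, akOO_zero_right, akEO_zero_left, akEO_zero_right]
    · intro a c; simp [akOO_zero_left, akOO_zero_right, akEO_zero_left, akEO_zero_right]
    · intro a b; simp [akOO_zero_left, akOO_zero_right, akEO_zero_left, akEO_zero_right]
    · intro a a' b c
      simp only [akOO_add_left, akOO_add_right, akEO_add_left, akEO_add_right]; abel
    · intro a b b' c
      simp only [akOO_add_left, akOO_add_right, akEO_add_left, akEO_add_right]; abel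
    · intro a b c c'
      simp only [akOO_add_left, akOO_add_right, akEO_add_left, akEO_add_right]; abel
    · intro p x q y r z
      simp only [akOO_single_single, akEO_single_single]
      have i1 : q + r + 1 + p = p + q + r + 1 := by ring
      have i2 : r + p + 1 + q = p + q + r + 1 := by ring
      have i3 : p + q + 1 + r = p + q + r + 1 := by ring
      rw [i1, i2, i3, ← Finsupp.single_add, ← Finsupp.single_add]
      convert Finsupp.single_zero (p + q + r + 1)
      · rfl
      push_cast
      ring

end
end

section
/- Let 𝔞 be a Lie antialgebra, ℬ an 𝔞-module, and c : 𝔞 × 𝔞 → ℬ a parity-preserving bilinear map, supersymmetric in the same sense as the product. Then the product on 𝔞 ⊕ ℬ defined by (a,b)·(a',b') = (a·a', a·b' + (-1)^{|a'||b|} a'·b + c(a,a')) is a Lie antialgebra structure if and only if c satisfies the four cocycle identities: (1) x₁·c(x₂,x₃) − c(x₁·x₂, x₃) + c(x₁, x₂·x₃) − c(x₁,x₂)·x₃ = 0; (2) c(x₁,x₂)·y + c(x₁·x₂, y) − 2x₁·c(x₂,y) − 2c(x₁, x₂·y) = 0; (3) c(x, y₁·y₂) + x·c(y₁,y₂) −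 c(x,y₁)·y₂ − c(x·y₁, y₂) − c(y₁, x·y₂) − y₁·c(x,y₂) = 0; (4) y₁·c(y₂,y₃) + c(y₁, y₂·y₃) + y₂·c(y₃,y₁) + c(y₂, y₃·y₁) + y₃·c(y₁,y₂) + c(y₃, y₁·y₂) = 0; where x's are even elements of 𝔞 and y's are odd. -/
/-!
STATEMENT 9: Abelian extensions and 2-cocycles.  Let `𝔞` be a Lie antialgebra
(structure maps `m00, m01, m11`), `ℬ` an `𝔞`-module (action maps `r00, r01, r10,
r11`), and `c` a parity-preserving bilinear map `𝔞 × 𝔞 → ℬ`, supersymmetric in the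
same sense as the product (components `c00` symmetric, `c01`, `c11` skew).  The
product on `𝔞 ⊕ ℬ` given by
`(a,b)·(a',b') = (a·a', a·b' + (-1)^{|a'||b|} a'·b + c(a,a'))`
is a Lie antialgebra structure if and only if `c` satisfies the four cocycle
identities (written with `x`'s even, `y`'s odd; the terms `c(·,·)·z` denote the
module action, with `b·y = (-1)^{|b||y|} y·b`).
-/

section
variable (K : Type*) [Field K]

def IsLieAnti {W0 W1 : Type*} [AddCommGroup W0] [Module K W0]
    [AddCommGroup W1] [Module K W1]
    (p00 : W0 → W0 → W0) (p01 : W0 → W1 → W1) (p11 : W1 → W1 → W0) : Prop :=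
  (∀ x₁ x₂ x₃, p00 x₁ (p00 x₂ x₃) = p00 (p00 x₁ x₂) x₃) ∧
  (∀ x₁ x₂ y, p01 x₁ (p01 x₂ y) = (1/2 : K) • p01 (p00 x₁ x₂) y) ∧
  (∀ x y₁ y₂, p00 x (p11 y₁ y₂) = p11 (p01 x y₁) y₂ + p11 y₁ (p01 x y₂)) ∧
  (∀ y₁ y₂ y₃, p01 (p11 y₂ y₃) y₁ + p01 (p11 y₃ y₁) y₂ + p01 (p11 y₁ y₂) y₃ = 0)

def IsBilin {X Y Z : Type*} [AddCommMonoid X] [AddCommMonoid Y] [AddCommMonoid Z]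
    [Module K X] [Module K Y] [Module K Z] (f : X → Y → Z) : Prop :=
  (∀ a a' b, f (a + a') b = f a b + f a' b) ∧
  (∀ (c : K) a b, f (c • a) b = c • f a b) ∧
  (∀ a b b', f a (b + b') = f a b + f a b') ∧
  (∀ a (c : K) b, f a (c • b) = c • f a b)
end

private lemma bz_right {K X Y Z : Type*} [Field K] [AddCommMonoid X] [AddCommMonoid Y]
    [AddCommMonoid Z] [Module K X] [Module K Y] [Module K Z] {f : X → Y → Z}
    (hb : IsBilin K f) (a : X) : f a 0 = 0 := by
  have := hb.2.2.2 a (0:K) 0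
  simpa using this

private lemma bsub_right {K X Y Z : Type*} [Field K] [AddCommGroup X] [AddCommGroup Y]
    [AddCommGroup Z] [Module K X] [Module K Y] [Module K Z] {f : X → Y → Z}
    (hb : IsBilin K f) (a : X) (b b' : Y) : f a (b - b') = f a b - f a b' := by
  have hneg : f a (-b') = - f a b' := by
    have := hb.2.2.2 a (-1:K) b'
    simpa [neg_one_smul] using this
  rw [sub_eq_add_neg, hb.2.2.1, hneg, ← sub_eq_add_neg]

private lemma half_of {K M : Type*} [Field K] [CharZero K] [AddCommGroup M] [Module K M]
    {X Y A B : M} (h : X + Y - (2:K)•A - (2:K)•B = 0) :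
    A + B = (1/2:K)•X + (1/2:K)•Y := by
  have h2 := congrArg (fun z => (1/2:K) • z) h
  simp only [smul_sub, smul_add, smul_smul, smul_zero] at h2
  norm_num at h2
  rw [sub_sub, sub_eq_zero] at h2
  exact h2.symm

private lemma double_of {K M : Type*} [Field K] [CharZero K] [AddCommGroup M] [Module K M]
    {X Y A B : M} (h : A + B = (1/2:K)•X + (1/2:K)•Y) :
    X + Y - (2:K)•A - (2:K)•B = 0 := by
  have h2 := congrArg (fun z => (2:K) • z) h
  simp only [smul_add, smul_smul] at h2
  norm_num at h2
  rw [sub_sub, sub_eq_zero]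
  exact h2.symm


theorem extension_is_lie_antialgebra_iff_cocycle
    {K V0 V1 B0 B1 : Type*} [Field K] [CharZero K]
    [AddCommGroup V0] [Module K V0] [AddCommGroup V1] [Module K V1]
    [AddCommGroup B0] [Module K B0] [AddCommGroup B1] [Module K B1]
    (m00 : V0 → V0 → V0) (m01 : V0 → V1 → V1) (m11 : V1 → V1 → V0)
    (r00 : V0 → B0 → B0) (r01 : V0 → B1 → B1)
    (r10 : V1 → B0 → B1) (r11 : V1 → B1 → B0)
    (c00 : V0 → V0 → B0) (c01 : V0 → V1 → B1) (c11 : V1 → V1 → B0)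
    (hsym : ∀ x₁ x₂, m00 x₁ x₂ = m00 x₂ x₁)
    (hskew : ∀ y₁ y₂, m11 y₁ y₂ = - m11 y₂ y₁)
    (hcsym : ∀ x₁ x₂, c00 x₁ x₂ = c00 x₂ x₁)
    (hcskew : ∀ y₁ y₂, c11 y₁ y₂ = - c11 y₂ y₁)
    (bm00 : IsBilin K m00) (bm01 : IsBilin K m01) (bm11 : IsBilin K m11)
    (br00 : IsBilin K r00) (br01 : IsBilin K r01)
    (br10 : IsBilin K r10) (br11 : IsBilin K r11)
    (bc00 : IsBilin K c00) (bc01 : IsBilin K c01) (bc11 : IsBilin K c11)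
    (hA : IsLieAnti K m00 m01 m11)
    -- ℬ is an 𝔞-module
    (hMod : IsLieAnti K
      (fun (a a' : V0 × B0) => (m00 a.1 a'.1, r00 a.1 a'.2 + r00 a'.1 a.2))
      (fun (a : V0 × B0) (b : V1 × B1) => (m01 a.1 b.1, r01 a.1 b.2 + r10 b.1 a.2))
      (fun (b b' : V1 × B1) => (m11 b.1 b'.1, r11 b.1 b'.2 - r11 b'.1 b.2))) :
    -- the extension product defined by `c` is a Lie antialgebra structure ↔
    -- `c` satisfies the four 2-cocycle identities
    (IsLieAnti K
      (fun (a a' : V0 × B0) =>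
        (m00 a.1 a'.1, r00 a.1 a'.2 + r00 a'.1 a.2 + c00 a.1 a'.1))
      (fun (a : V0 × B0) (b : V1 × B1) =>
        (m01 a.1 b.1, r01 a.1 b.2 + r10 b.1 a.2 + c01 a.1 b.1))
      (fun (b b' : V1 × B1) =>
        (m11 b.1 b'.1, r11 b.1 b'.2 - r11 b'.1 b.2 + c11 b.1 b'.1)))
    ↔
    -- (1) x₁·c(x₂,x₃) - c(x₁·x₂,x₃) + c(x₁,x₂·x₃) - c(x₁,x₂)·x₃ = 0
    ((∀ x₁ x₂ x₃, r00 x₁ (c00 x₂ x₃) - c00 (m00 x₁ x₂) x₃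
        + c00 x₁ (m00 x₂ x₃) - r00 x₃ (c00 x₁ x₂) = 0) ∧
    -- (2) c(x₁,x₂)·y + c(x₁·x₂,y) - 2 x₁·c(x₂,y) - 2 c(x₁,x₂·y) = 0
     (∀ x₁ x₂ y, r10 y (c00 x₁ x₂) + c01 (m00 x₁ x₂) y
        - (2 : K) • r01 x₁ (c01 x₂ y) - (2 : K) • c01 x₁ (m01 x₂ y) = 0) ∧
    -- (3) c(x,y₁·y₂) + x·c(y₁,y₂) - c(x,y₁)·y₂ - c(x·y₁,y₂) - c(y₁,x·y₂) - y₁·c(x,y₂) = 0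
     (∀ x y₁ y₂, c00 x (m11 y₁ y₂) + r00 x (c11 y₁ y₂)
        + r11 y₂ (c01 x y₁) - c11 (m01 x y₁) y₂
        - c11 y₁ (m01 x y₂) - r11 y₁ (c01 x y₂) = 0) ∧
    -- (4) y₁·c(y₂,y₃) + c(y₁,y₂·y₃) + (cyclic) = 0
     (∀ y₁ y₂ y₃, r10 y₁ (c11 y₂ y₃) + c01 (m11 y₂ y₃) y₁
        + r10 y₂ (c11 y₃ y₁) + c01 (m11 y₃ y₁) y₂
        + r10 y₃ (c11 y₁ y₂) + c01 (m11 y₁ y₂) y₃ = 0)) := by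
  have zr00 := bz_right br00
  have zr01 := bz_right br01
  have zr10 := bz_right br10
  have zr11 := bz_right br11
  obtain ⟨hM1, hM2, hM3, hM4⟩ := hMod
  constructor
  · rintro ⟨hE1, hE2, hE3, hE4⟩
    refine ⟨?_, ?_, ?_, ?_⟩
    · intro x₁ x₂ x₃
      have h := congrArg Prod.snd (hE1 (x₁, 0) (x₂, 0) (x₃, 0))
      simp only [zr00, zero_add, add_zero] at h
      rw [← sub_eq_zero] at h
      abel_nf at h ⊢
      exact h
    · intro x₁ x₂ y
      have h := congrArg Prod.snd (hE2 (x₁, 0) (x₂, 0) (y, 0))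
      simp only [Prod.smul_snd, zr00, zr01, zr10, zr11, zero_add, add_zero, smul_add] at h
      exact double_of h
    · intro x y₁ y₂
      have h := congrArg Prod.snd (hE3 (x, 0) (y₁, 0) (y₂, 0))
      simp only [Prod.snd_add, zr00, zr01, zr10, zr11, zero_add, add_zero, sub_zero,
        zero_sub] at h
      rw [← sub_eq_zero] at h
      abel_nf at h ⊢
      exact h
    · intro y₁ y₂ y₃
      have h := congrArg Prod.snd (hE4 (y₁, 0) (y₂, 0) (y₃, 0))
      simp only [Prod.snd_add, zr00, zr01, zr10, zr11, zero_add, add_zero, sub_zero,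
        zero_sub, Prod.snd_zero] at h
      abel_nf at h ⊢
      exact h
  · rintro ⟨h1, h2, h3, h4⟩
    refine ⟨?_, ?_, ?_, ?_⟩
    · intro a₁ a₂ a₃
      refine Prod.ext (hA.1 a₁.1 a₂.1 a₃.1) ?_
      have hm := congrArg Prod.snd (hM1 a₁ a₂ a₃)
      have hc := h1 a₁.1 a₂.1 a₃.1
      simp only [br00.2.2.1] at hm ⊢
      rw [← sub_eq_zero] at hm ⊢
      have H := congrArg₂ (· + ·) hm hc
      simp only [add_zero] at H
      abel_nf at H ⊢
      exact H
    · intro a₁ a₂ b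
      refine Prod.ext ?_ ?_
      · simpa [Prod.smul_fst] using hA.2.1 a₁.1 a₂.1 b.1
      have hm := congrArg Prod.snd (hM2 a₁ a₂ b)
      have hc := half_of (h2 a₁.1 a₂.1 b.1)
      simp only [Prod.smul_snd] at hm ⊢
      simp only [br01.2.2.1, br10.2.2.1, smul_add] at hm ⊢
      rw [← sub_eq_zero] at hm hc ⊢
      have H := congrArg₂ (· + ·) hm hc
      simp only [add_zero] at H
      abel_nf at H ⊢
      exact H
    · intro a b₁ b₂
      refine Prod.ext (hA.2.2.1 a.1 b₁.1 b₂.1) ?_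
      have hm := congrArg Prod.snd (hM3 a b₁ b₂)
      have hc := h3 a.1 b₁.1 b₂.1
      simp only [Prod.snd_add, bsub_right br00, br00.2.2.1, br11.2.2.1] at hm ⊢
      rw [← sub_eq_zero] at hm ⊢
      have H := congrArg₂ (· + ·) hm hc
      simp only [add_zero] at H
      abel_nf at H ⊢
      exact H
    · intro b₁ b₂ b₃
      refine Prod.ext ?_ ?_
      · simpa using hA.2.2.2 b₁.1 b₂.1 b₃.1
      have hm := congrArg Prod.snd (hM4 b₁ b₂ b₃)
      have hc := h4 b₁.1 b₂.1 b₃.1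
      simp only [Prod.snd_add, bsub_right br10, br10.2.2.1, Prod.snd_zero] at hm ⊢
      have H := congrArg₂ (· + ·) hm hc
      simp only [add_zero] at H
      abel_nf at H ⊢
      exact H
end

section
/- Let 𝔞 be a Lie antialgebra and ℬ an 𝔞-module. A parity-preserving linear map c : 𝔞 → ℬ, written c = c₀₀ + c₁₁ with c₀₀ : 𝔞₀ → ℬ₀ and c₁₁ : 𝔞₁ → ℬ₁, is a 1-cocycle in the alternated Hochschild complex if and only if c is an even derivation: c(a·a') = c(a)·a' + a·c(a') for all homogeneous a, a' ∈ 𝔞 (with the appropriate scaling on even-even products coming from m(x₁,x₂) = (1/2)x₁·x₂). Moreover, the space of 1-coboundaries is zero, so H¹(𝔞;ℬ) equals the space of even derivations of 𝔞 with values in ℬ. -/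
/-!
STATEMENT 11: First cohomology of a Lie antialgebra `𝔞` with coefficients in an
`𝔞`-module `ℬ`.  A parity preserving linear map `c = c₀₀ + c₁₁` (with
`c₀₀ : 𝔞₀ → ℬ₀`, `c₁₁ : 𝔞₁ → ℬ₁`) is a 1-cocycle of the alternated Hochschild
complex — i.e. `δ_{1,0}c₀₀ = 0`, `δ_{0,1}c₀₀ + δ_{1,0}c₁₁ = 0`,
`δ_{-1,2}c₀₀ + δ_{0,1}c₁₁ = 0`, with the coboundary components written out
explicitly below for the structure map `m(x₁,x₂) = (1/2)x₁·x₂`, `m(x,y) = x·y`,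
`m(y₁,y₂) = y₁·y₂` — if and only if `c` is an even derivation of `𝔞` with values in
`ℬ`: `c(a·a') = c(a)·a' + a·c(a')`.
(The space of 1-coboundaries of the complex is zero, since the complex has no
cochains of degree 0, so `H¹(𝔞;ℬ)` is the space of even derivations.)
-/

section
variable (K : Type*) [Field K]

def IsLin {X Y : Type*} [AddCommMonoid X] [AddCommMonoid Y]
    [Module K X] [Module K Y] (f : X → Y) : Prop :=
  (∀ a a', f (a + a') = f a + f a') ∧ (∀ (c : K) a, f (c • a) = c • f a)
end

theorem one_cocycle_iff_even_derivation
    {K V0 V1 B0 B1 : Type*} [Field K] [CharZero K]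
    [AddCommGroup V0] [Module K V0] [AddCommGroup V1] [Module K V1]
    [AddCommGroup B0] [Module K B0] [AddCommGroup B1] [Module K B1]
    (m00 : V0 → V0 → V0) (m01 : V0 → V1 → V1) (m11 : V1 → V1 → V0)
    (r00 : V0 → B0 → B0) (r01 : V0 → B1 → B1)
    (r10 : V1 → B0 → B1) (r11 : V1 → B1 → B0)
    (c00 : V0 → B0) (c11 : V1 → B1)
    (hsym : ∀ x₁ x₂, m00 x₁ x₂ = m00 x₂ x₁)
    (hskew : ∀ y₁ y₂, m11 y₁ y₂ = - m11 y₂ y₁)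
    (hA : IsLieAnti K m00 m01 m11)
    (hMod : IsLieAnti K
      (fun (a a' : V0 × B0) => (m00 a.1 a'.1, r00 a.1 a'.2 + r00 a'.1 a.2))
      (fun (a : V0 × B0) (b : V1 × B1) => (m01 a.1 b.1, r01 a.1 b.2 + r10 b.1 a.2))
      (fun (b b' : V1 × B1) => (m11 b.1 b'.1, r11 b.1 b'.2 - r11 b'.1 b.2)))
    (hc00 : IsLin K c00) (hc11 : IsLin K c11) :
    -- the 1-cocycle conditions
    -- δ_{1,0}c₀₀ = 0 : (standard Hochschild, with m(x₀,x₁) = (1/2)x₀·x₁)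
    ((∀ x₀ x₁, (1/2 : K) • r00 x₀ (c00 x₁) - c00 ((1/2 : K) • m00 x₀ x₁)
        + (1/2 : K) • r00 x₁ (c00 x₀) = 0) ∧
    -- δ_{0,1}c₀₀ + δ_{1,0}c₁₁ = 0 :  -c₀₀(x)·y - x·c₁₁(y) + c₁₁(x·y) = 0
     (∀ x y, - r10 y (c00 x) - r01 x (c11 y) + c11 (m01 x y) = 0) ∧
    -- δ_{-1,2}c₀₀ + δ_{0,1}c₁₁ = 0 :  c₀₀(y₀·y₁) + c₁₁(y₁)·y₀ - c₁₁(y₀)·y₁ = 0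
     (∀ y₀ y₁, c00 (m11 y₀ y₁) - r11 y₀ (c11 y₁) + r11 y₁ (c11 y₀) = 0))
    ↔
    -- c is an even derivation: c(a·a') = c(a)·a' + a·c(a')
    ((∀ x x', c00 (m00 x x') = r00 x' (c00 x) + r00 x (c00 x')) ∧
     (∀ x y, c11 (m01 x y) = r10 y (c00 x) + r01 x (c11 y)) ∧
     (∀ y y', c00 (m11 y y') = r11 y (c11 y') - r11 y' (c11 y))) := by
  constructor
  · rintro ⟨h1, h2, h3⟩
    refine ⟨fun x x' => ?_, fun x y => ?_, fun y y' => ?_⟩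
    · have h := h1 x x'
      rw [hc00.2] at h
      have key : (1/2 : K) • (c00 (m00 x x') - (r00 x' (c00 x) + r00 x (c00 x'))) = 0 := by
        rw [smul_sub, smul_add, sub_eq_zero, eq_comm]
        linear_combination (norm := abel) h
      have h2ne : (1/2 : K) ≠ 0 := by norm_num
      have h0 := (smul_eq_zero.mp key).resolve_left h2ne
      exact sub_eq_zero.mp h0
    · have h := h2 x y
      linear_combination (norm := abel) h
    · have h := h3 y y'
      linear_combination (norm := abel) h
  · rintro ⟨h1, h2, h3⟩
    refine ⟨fun x₀ x₁ => ?_, fun x y => ?_, fun y₀ y₁ => ?_⟩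
    · rw [hc00.2, h1]
      rw [smul_add]; abel
    · have h := h2 x y
      linear_combination (norm := abel) h
    · have h := h3 y₀ y₁
      linear_combination (norm := abel) h
end
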